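/- Define μ̃(s, q) = q·(2λ_p(s)^{1/2}φ(λ_p(s)^{1/2}) + 2Φ̄(λ_p(s)^{1/2})) and σ̃(s, q) = √( q·(2(λ_p(s)^{3/2} + 3λ_p(s)^{1/2})φ(λ_p(s)^{1/2}) + 6Φ̄(λ_p(s)^{1/2})) ), with λ_p(s) = 4s log p and p ≥ 2, q ≥ 1 fixed. Then both s ↦ μ̃(s, q) and s ↦ σ̃(s, q) are strictly monotone decreasing on (0, 1). -/

import Mathlib

/-!
With `x = √λ_p(s)` and `Z` standard normal, `μ̃ = q·E[Z²; |Z| > x]` and `σ̃² = q·E[Z⁴; |Z| > x]`.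
Differentiating the closed forms in `x` gives `-2x²φ(x)` and `-2x⁴φ(x)`, both negative for
`x > 0`, and `x = √(4 s log p)` is strictly increasing in `s` once `p > 1`.
-/

open Real

/-- Standard normal density. -/
noncomputable def stdNormalPDF (x : ℝ) : ℝ :=
  (Real.sqrt (2 * Real.pi))⁻¹ * Real.exp (-x^2 / 2)

/-- Standard normal survival function `Φ̄`. -/
noncomputable def stdNormalSurvival (x : ℝ) : ℝ :=
  ∫ t in Set.Ioi x, stdNormalPDF t

/-- Threshold level `λ_p(s) = 4 s log p`. -/
noncomputable def lamP (p : ℕ) (s : ℝ) : ℝ := 4 * s * Real.log p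

/-- Main-order null mean `μ̃(s, q)` of the thresholding statistic. -/
noncomputable def muTilde (p : ℕ) (q s : ℝ) : ℝ :=
  q * (2 * Real.sqrt (lamP p s) * stdNormalPDF (Real.sqrt (lamP p s))
        + 2 * stdNormalSurvival (Real.sqrt (lamP p s)))

/-- Main-order null standard deviation `σ̃(s, q)` of the thresholding statistic. -/
noncomputable def sigmaTilde (p : ℕ) (q s : ℝ) : ℝ :=
  Real.sqrt (q * (2 * ((lamP p s) ^ ((3:ℝ)/2) + 3 * Real.sqrt (lamP p s))
      * stdNormalPDF (Real.sqrt (lamP p s))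
      + 6 * stdNormalSurvival (Real.sqrt (lamP p s))))

open Set MeasureTheory

lemma stdNormalPDF_pos (x : ℝ) : 0 < stdNormalPDF x := by
  unfold stdNormalPDF
  positivity

lemma continuous_stdNormalPDF : Continuous stdNormalPDF := by
  unfold stdNormalPDF
  fun_prop

lemma integrable_stdNormalPDF : Integrable stdNormalPDF := by
  refine ((integrable_exp_neg_mul_sq (b := 1 / 2) (by norm_num)).const_mul
    (√(2 * π))⁻¹).congr (Filter.Eventually.of_forall fun x => ?_)
  simp only [stdNormalPDF]
  ring_nf

lemma hasDerivAt_stdNormalPDF (x : ℝ) :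
    HasDerivAt stdNormalPDF (-x * stdNormalPDF x) x := by
  have hexp : HasDerivAt (fun x : ℝ => -x ^ 2 / 2) (-x) x := by
    simpa using ((hasDerivAt_pow 2 x).neg.div_const 2).congr_deriv (by ring)
  exact (hexp.exp.const_mul (√(2 * π))⁻¹).congr_deriv (by unfold stdNormalPDF; ring)

lemma stdNormalSurvival_eq_sub_intervalIntegral (x : ℝ) :
    stdNormalSurvival x = stdNormalSurvival 0 - ∫ t in (0 : ℝ)..x, stdNormalPDF t := by
  have := intervalIntegral.integral_interval_add_Ioi (f := stdNormalPDF) (a := 0) (b := x)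
    integrable_stdNormalPDF.integrableOn integrable_stdNormalPDF.integrableOn
  unfold stdNormalSurvival
  linarith

lemma hasDerivAt_stdNormalSurvival (x : ℝ) :
    HasDerivAt stdNormalSurvival (-stdNormalPDF x) x := by
  have hFTC : HasDerivAt (fun u => ∫ t in (0 : ℝ)..u, stdNormalPDF t) (stdNormalPDF x) x :=
    intervalIntegral.integral_hasDerivAt_right integrable_stdNormalPDF.intervalIntegrable
      continuous_stdNormalPDF.aestronglyMeasurable.stronglyMeasurableAtFilter
      continuous_stdNormalPDF.continuousAt
  have := (hasDerivAt_const x (stdNormalSurvival 0)).sub hFTC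
  rw [zero_sub] at this
  exact this.congr_of_eventuallyEq
    (Filter.Eventually.of_forall stdNormalSurvival_eq_sub_intervalIntegral)

lemma stdNormalSurvival_nonneg (x : ℝ) : 0 ≤ stdNormalSurvival x :=
  integral_nonneg fun t => (stdNormalPDF_pos t).le

/-- `E[Z²; |Z| > x]` for a standard normal `Z`, in closed form. -/
noncomputable def gaussTailSecondMoment (x : ℝ) : ℝ :=
  2 * x * stdNormalPDF x + 2 * stdNormalSurvival x

/-- `E[Z⁴; |Z| > x]` for a standard normal `Z`, in closed form. -/
noncomputable def gaussTailFourthMoment (x : ℝ) : ℝ :=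
  2 * (x ^ 3 + 3 * x) * stdNormalPDF x + 6 * stdNormalSurvival x

lemma hasDerivAt_gaussTailSecondMoment (x : ℝ) :
    HasDerivAt gaussTailSecondMoment (-2 * x ^ 2 * stdNormalPDF x) x := by
  have hlin : HasDerivAt (fun x : ℝ => 2 * x) 2 x := by
    simpa using (hasDerivAt_id x).const_mul 2
  exact ((hlin.mul (hasDerivAt_stdNormalPDF x)).add
    ((hasDerivAt_stdNormalSurvival x).const_mul 2)).congr_deriv (by ring)

lemma hasDerivAt_gaussTailFourthMoment (x : ℝ) :
    HasDerivAt gaussTailFourthMoment (-2 * x ^ 4 * stdNormalPDF x) x := by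
  have hcubic : HasDerivAt (fun x : ℝ => 2 * (x ^ 3 + 3 * x)) (2 * (3 * x ^ 2 + 3)) x := by
    simpa using ((hasDerivAt_pow 3 x).add ((hasDerivAt_id x).const_mul 3)).const_mul 2
  exact ((hcubic.mul (hasDerivAt_stdNormalPDF x)).add
    ((hasDerivAt_stdNormalSurvival x).const_mul 6)).congr_deriv (by ring)

lemma strictAntiOn_of_hasDerivAt_neg_mul_pow_stdNormalPDF {f : ℝ → ℝ} {n : ℕ}
    (hf : ∀ x, HasDerivAt f (-2 * x ^ n * stdNormalPDF x) x) : StrictAntiOn f (Ici 0) := by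
  refine strictAntiOn_of_deriv_neg (convex_Ici 0)
    (fun x _ => (hf x).continuousAt.continuousWithinAt) fun x hx => ?_
  rw [interior_Ici] at hx
  rw [(hf x).deriv]
  have := mul_pos (pow_pos hx n) (stdNormalPDF_pos x)
  linarith

lemma gaussTailFourthMoment_nonneg {x : ℝ} (hx : 0 ≤ x) : 0 ≤ gaussTailFourthMoment x := by
  have := stdNormalPDF_pos x
  have := stdNormalSurvival_nonneg x
  unfold gaussTailFourthMoment
  positivity

lemma lamP_nonneg (p : ℕ) {s : ℝ} (hs : 0 ≤ s) : 0 ≤ lamP p s := by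
  have := log_natCast_nonneg p
  unfold lamP
  positivity

lemma strictMonoOn_sqrt_lamP {p : ℕ} (hp : 1 < p) :
    StrictMonoOn (fun s => √(lamP p s)) (Ici 0) := by
  have hlog : 0 < Real.log p := Real.log_pos (by exact_mod_cast hp)
  refine strictMonoOn_sqrt.comp (fun s _ t _ hst => ?_) fun s hs => lamP_nonneg p hs
  unfold lamP
  nlinarith

lemma sigmaTilde_eq (p : ℕ) (q : ℝ) {s : ℝ} (hs : 0 ≤ lamP p s) :
    sigmaTilde p q s = √(q * gaussTailFourthMoment √(lamP p s)) := by
  have hpow : lamP p s ^ ((3 : ℝ) / 2) = √(lamP p s) ^ 3 := by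
    rw [rpow_div_two_eq_sqrt 3 hs]
    norm_cast
  rw [sigmaTilde, hpow, gaussTailFourthMoment]

lemma strictAntiOn_muTilde {p : ℕ} (hp : 1 < p) {q : ℝ} (hq : 0 < q) :
    StrictAntiOn (muTilde p q) (Ici 0) := by
  have hg := (strictAntiOn_of_hasDerivAt_neg_mul_pow_stdNormalPDF
    hasDerivAt_gaussTailSecondMoment).comp_strictMonoOn (strictMonoOn_sqrt_lamP hp)
    fun s _ => sqrt_nonneg _
  exact fun s hs t ht hst => mul_lt_mul_of_pos_left (hg hs ht hst) hq

lemma strictAntiOn_sigmaTilde {p : ℕ} (hp : 1 < p) {q : ℝ} (hq : 0 < q) :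
    StrictAntiOn (sigmaTilde p q) (Ici 0) := by
  have hh := (strictAntiOn_of_hasDerivAt_neg_mul_pow_stdNormalPDF
    hasDerivAt_gaussTailFourthMoment).comp_strictMonoOn (strictMonoOn_sqrt_lamP hp)
    fun s _ => sqrt_nonneg _
  intro s hs t ht hst
  rw [sigmaTilde_eq p q (lamP_nonneg p hs), sigmaTilde_eq p q (lamP_nonneg p ht)]
  exact sqrt_lt_sqrt (mul_nonneg hq.le (gaussTailFourthMoment_nonneg (sqrt_nonneg _)))
    (mul_lt_mul_of_pos_left (hh hs ht hst) hq)

theorem stmt_8 (p : ℕ) (hp : 2 ≤ p) (q : ℝ) (hq : 1 ≤ q) :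
    StrictAntiOn (fun s => muTilde p q s) (Set.Ioo (0 : ℝ) 1) ∧
    StrictAntiOn (fun s => sigmaTilde p q s) (Set.Ioo (0 : ℝ) 1) := by
  have hp1 : 1 < p := hp
  have hq0 : 0 < q := one_pos.trans_le hq
  have hsub : Ioo (0 : ℝ) 1 ⊆ Ici 0 := fun s hs => hs.1.le
  exact ⟨(strictAntiOn_muTilde hp1 hq0).mono hsub, (strictAntiOn_sigmaTilde hp1 hq0).mono hsub⟩
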